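/- Let L be a finite meet-semilattice, X = {x₁,…,x_n} ⊆ L, and X̄ = {x₁,…,x_n,x_{n+1},…,x_{n+m}} the smallest factor-closed subset of L containing X. Let R be a commutative ring, k ≥ 2, 𝓕 : (S_n)^{k-2} → R any map; for each x ∈ X fix z_x ∈ X̄ with z_x ≤ x and a function F_x : X̄ → R, and set f_x(z) = ∑_{y ∈ X̄} μ(y,z) F_x(y), with μ the Möbius function of X̄ and ζ(u,v) = 1 if u ≤ v, 0 otherwise. Then Det_𝓕( (F_{x_{i₁}}(z_{x_{i₁}} ∧ x_{i₂} ∧ ⋯ ∧ x_{i_k}))_{1≤i₁,…,i_k≤n} ) = ∑_{1 ≤ k₁ < ⋯ < k_n ≤ n+m} Det_𝓕( (f_{x_{i₁}}(x_{k_{i₂}}) · ζ(x_{k_{i₂}}, z_{x_{i₁}} ∧ x_{i₃} ∧ ⋯ ∧ x_{i_k}))_{1≤i₁,…,i_k≤n} ) · det( ζ(x_{k_i}, x_j) )_{1≤i,j≤n}. -/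

import Mathlib

/-- The `𝓕`-determinant of a `k`-dimensional hypermatrix (`k = m + 2`), where the first two
indices are explicit and the remaining `m = k - 2` indices are gathered in a tuple:
`Det_𝓕(M) = ∑_{(σ₂,σ₃,…,σ_k)} sign(σ₂) ⋅ 𝓕(σ₃,…,σ_k) ⋅ ∏_i M_{i,σ₂(i),…,σ_k(i)}`. -/
def DetF {R : Type*} [CommRing R] {n p : ℕ}
    (𝓕 : (Fin p → Equiv.Perm (Fin n)) → R)
    (M : Fin n → Fin n → (Fin p → Fin n) → R) : R :=
  ∑ σ₂ : Equiv.Perm (Fin n), ∑ τ : Fin p → Equiv.Perm (Fin n),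
    ((Equiv.Perm.sign σ₂ : ℤ) : R) * 𝓕 τ * ∏ i : Fin n, M i (σ₂ i) (fun j => τ j i)

/-- The meet `a ⊓ v 0 ⊓ v 1 ⊓ ⋯` of an element `a` with a tuple `v` of elements of a
meet-semilattice. -/
def meetAll {L : Type*} [SemilatticeInf L] {p : ℕ} (a : L) (v : Fin p → L) : L :=
  (List.ofFn v).foldr (· ⊓ ·) a

/-!
Every meet `z_{x_{i₁}} ∧ x_{i₂} ∧ ⋯ ∧ x_{i_k}` lies in the lower set `X̄`, whose intervals are
those of `L`, so Möbius inversion on `X̄` gives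
`F(z ∧ w ∧ x_{i₂}) = ∑_j f(x_j) ζ(x_j, z ∧ w) ζ(x_j, x_{i₂})`: the hypermatrix is the product,
along its second index, of an `n × (n + m)` hypermatrix with the zeta matrix. Writing
`Det_𝓕 = ∑_τ 𝓕(τ) det(slice_τ)` and applying the Cauchy–Binet formula to every slice gives the
expansion.
-/

open Finset

theorem meetAll_inf {L : Type*} [SemilatticeInf L] {p : ℕ} (a b : L) (v : Fin p → L) :
    meetAll (a ⊓ b) v = meetAll a v ⊓ b := by
  unfold meetAll
  generalize List.ofFn v = l
  induction l with
  | nil => rfl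
  | cons c l ih => simp only [List.foldr_cons, ih, inf_assoc]

namespace IncidenceAlgebra

variable {L R : Type*} [PartialOrder L] [LocallyFiniteOrder L] [DecidableEq L] [DecidableLE L]
  [CommRing R] {s : Finset L}

theorem sum_mu_mul_zeta_of_isLowerSet (hs : IsLowerSet (s : Set L)) {v : L} (hv : v ∈ s)
    (u : L) : ∑ y ∈ s, mu R u y * zeta R y v = if u = v then 1 else 0 := by
  rw [← one_apply (𝕜 := R), ← mu_mul_zeta, mul_apply]
  refine (sum_subset (fun y hy => hs (mem_Icc.1 hy).2 hv) fun y _ hy => ?_).symm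
  rcases not_and_or.1 (mem_Icc.not.1 hy) with h | h
  · rw [apply_eq_zero_of_not_le h, zero_mul]
  · rw [apply_eq_zero_of_not_le h, mul_zero]

theorem eq_sum_mul_zeta_of_isLowerSet (hs : IsLowerSet (s : Set L)) {F f : L → R}
    (hf : ∀ v ∈ s, f v = ∑ y ∈ s, mu R y v * F y) {v : L} (hv : v ∈ s) :
    F v = ∑ y ∈ s, f y * zeta R y v :=
  calc F v = ∑ u ∈ s, F u * if u = v then 1 else 0 := by simp [hv]
    _ = ∑ u ∈ s, F u * ∑ y ∈ s, mu R u y * zeta R y v := by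
      simp only [sum_mu_mul_zeta_of_isLowerSet hs hv]
    _ = ∑ y ∈ s, f y * zeta R y v := by
      simp only [mul_sum]
      rw [sum_comm]
      refine sum_congr rfl fun y hy => ?_
      rw [hf y hy, sum_mul]
      exact sum_congr rfl fun u _ => by ring

end IncidenceAlgebra

theorem Fintype.sum_eq_sum_strictMono_comp_perm {M α : Type*} [AddCommMonoid M] [LinearOrder α]
    [Fintype α] {n : ℕ} (G : (Fin n → α) → M) (hG : ∀ r, ¬ Function.Injective r → G r = 0) :
    ∑ r, G r = ∑ κ ∈ univ.filter (fun κ : Fin n → α => ∀ i j, i < j → κ i < κ j),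
      ∑ π : Equiv.Perm (Fin n), G (κ ∘ π) := by
  rw [← sum_filter_of_ne (p := Function.Injective) fun r _ h => not_not.1 (mt (hG r) h),
    ← sum_product']
  -- an injective tuple is uniquely a strictly monotone one composed with a permutation (its sorting)
  refine (sum_bij' (fun q _ => q.1 ∘ q.2) (fun r _ => (r ∘ Tuple.sort r, (Tuple.sort r)⁻¹))
    ?_ ?_ ?_ ?_ fun _ _ => rfl).symm
  · rintro ⟨κ, π⟩ hq
    simp only [mem_product, mem_filter, mem_univ, true_and, and_true] at hq ⊢
    exact (StrictMono.injective fun a b h => hq a b h).comp π.injective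
  · intro r hr
    simp only [mem_product, mem_filter, mem_univ, true_and, and_true] at hr ⊢
    exact fun a b h =>
      (Tuple.monotone_sort r).strictMono_of_injective (hr.comp (Tuple.sort r).injective) h
  · rintro ⟨κ, π⟩ hq
    simp only [mem_product, mem_filter, mem_univ, true_and, and_true] at hq
    have hκ : StrictMono κ := fun a b h => hq a b h
    have hsort : (κ ∘ π) ∘ Tuple.sort (κ ∘ π) = (κ ∘ π) ∘ ⇑π⁻¹ :=
      Tuple.unique_monotone (Tuple.monotone_sort _)
        (by simpa [Function.comp_assoc] using hκ.monotone)
    have hperm : Tuple.sort (κ ∘ π) = π⁻¹ :=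
      Equiv.ext fun i => (hκ.injective.comp π.injective) (congrFun hsort i)
    simp [hperm, Function.comp_assoc]
  · intro r _
    simp [Function.comp_assoc]

namespace Matrix

variable {R : Type*} [CommRing R]

theorem det_mul_eq_sum_prod_mul_det_submatrix {m n : Type*} [Fintype m] [DecidableEq m]
    [Fintype n] (A : Matrix m n R) (B : Matrix n m R) :
    (A * B).det = ∑ r : m → n, (∏ i, A i (r i)) * (B.submatrix r id).det := by
  have hrows : A * B = fun i => ∑ j, A i j • B j := by
    ext i k
    simp [mul_apply, Finset.sum_apply]
  rw [hrows]
  change detRowAlternating.toMultilinearMap _ = _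
  rw [MultilinearMap.map_sum]
  refine sum_congr rfl fun r _ => ?_
  rw [MultilinearMap.map_smul_univ]
  rfl

theorem det_mul_eq_sum_det_submatrix_mul_det_submatrix {α : Type*} [LinearOrder α] [Fintype α]
    {n : ℕ} (A : Matrix (Fin n) α R) (B : Matrix α (Fin n) R) :
    (A * B).det = ∑ κ ∈ univ.filter (fun κ : Fin n → α => ∀ i j, i < j → κ i < κ j),
      (A.submatrix id κ).det * (B.submatrix κ id).det := by
  rw [det_mul_eq_sum_prod_mul_det_submatrix, Fintype.sum_eq_sum_strictMono_comp_perm]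
  · refine sum_congr rfl fun κ _ => ?_
    calc ∑ π : Equiv.Perm (Fin n), (∏ i, A i ((κ ∘ π) i)) * (B.submatrix (κ ∘ π) id).det
        = ∑ π : Equiv.Perm (Fin n), (Equiv.Perm.sign π * ∏ i, A i (κ (π i))) *
            (B.submatrix κ id).det := by
          refine sum_congr rfl fun π _ => ?_
          have hB : B.submatrix (κ ∘ π) id = (B.submatrix κ id).submatrix π id := rfl
          rw [hB, det_permute]
          simp only [Function.comp_apply]
          ring
      _ = (A.submatrix id κ).det * (B.submatrix κ id).det := by
          rw [← sum_mul, ← det_transpose (A.submatrix id κ), det_apply' (A.submatrix id κ)ᵀ]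
          rfl
  · intro r hr
    obtain ⟨a, b, hab, hne⟩ := Function.not_injective_iff.1 hr
    rw [det_zero_of_row_eq hne (congrArg (fun y k => B y k) hab), mul_zero]

end Matrix

section DetF

variable {R : Type*} [CommRing R] {n p : ℕ} (𝓕 : (Fin p → Equiv.Perm (Fin n)) → R)

theorem detF_eq_sum_mul_det (M : Fin n → Fin n → (Fin p → Fin n) → R) :
    DetF 𝓕 M = ∑ τ, 𝓕 τ * (Matrix.of fun i₁ i₂ => M i₁ i₂ fun l => τ l i₁).det := by
  rw [DetF, sum_comm]
  refine sum_congr rfl fun τ _ => ?_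
  rw [← Matrix.det_transpose, Matrix.det_apply', mul_sum]
  refine sum_congr rfl fun σ _ => ?_
  simp only [Matrix.transpose_apply, Matrix.of_apply]
  ring

theorem detF_sum_mul_eq_sum_detF_mul_det {α : Type*} [LinearOrder α] [Fintype α]
    (A : Fin n → α → (Fin p → Fin n) → R) (B : Matrix α (Fin n) R) :
    DetF 𝓕 (fun i₁ i₂ t => ∑ j, A i₁ j t * B j i₂) =
      ∑ κ ∈ univ.filter (fun κ : Fin n → α => ∀ i j, i < j → κ i < κ j),
        DetF 𝓕 (fun i₁ i₂ t => A i₁ (κ i₂) t) * (B.submatrix κ id).det := by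
  have hprod : ∀ τ : Fin p → Equiv.Perm (Fin n),
      (Matrix.of fun i₁ i₂ => ∑ j, A i₁ j (fun l => τ l i₁) * B j i₂) =
        (Matrix.of fun i j => A i j fun l => τ l i) * B := fun _ => rfl
  simp only [detF_eq_sum_mul_det, hprod, Matrix.det_mul_eq_sum_det_submatrix_mul_det_submatrix,
    mul_sum, sum_mul]
  rw [sum_comm]
  exact sum_congr rfl fun κ _ => sum_congr rfl fun τ _ => (mul_assoc _ _ _).symm

end DetF

theorem li_expansion_detF_general {L R : Type*} [DecidableEq L] [SemilatticeInf L]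
    [LocallyFiniteOrder L] [DecidableRel ((· ≤ ·) : L → L → Prop)] [CommRing R]
    {n m p : ℕ} (x : Fin (n + m) → L) (hinj : Function.Injective x)
    (hfc : ∀ (j : Fin (n + m)) (w : L), w ≤ x j → ∃ j' : Fin (n + m), x j' = w)
    (z : Fin n → L)
    (𝓕 : (Fin p → Equiv.Perm (Fin n)) → R)
    (F : Fin n → L → R)
    (f : Fin n → L → R)
    (hf : ∀ i v, f i v = ∑ j : Fin (n + m), IncidenceAlgebra.mu R (x j) v * F i (x j)) :
    DetF 𝓕 (fun i₁ i₂ t =>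
        F i₁ (meetAll (z i₁ ⊓ x (Fin.castAdd m i₂)) (fun l => x (Fin.castAdd m (t l))))) =
      ∑ κ ∈ Finset.univ.filter
          (fun κ : Fin n → Fin (n + m) => ∀ i j : Fin n, i < j → κ i < κ j),
        DetF 𝓕 (fun i₁ i₂ t =>
            f i₁ (x (κ i₂)) *
              (if x (κ i₂) ≤ meetAll (z i₁) (fun l => x (Fin.castAdd m (t l))) then (1 : R)
                else 0)) *
          Matrix.det (Matrix.of fun i j : Fin n =>
            if x (κ i) ≤ x (Fin.castAdd m j) then (1 : R) else 0) := by
  set s : Finset L := univ.map ⟨x, hinj⟩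
  have hmem : ∀ j, x j ∈ s := fun j => mem_map_of_mem _ (mem_univ j)
  have hs : IsLowerSet (s : Set L) := by
    simp only [s, coe_map, coe_univ, Set.image_univ, Function.Embedding.coeFn_mk]
    rintro _ w hw ⟨j, rfl⟩
    exact hfc j w hw
  have hfs : ∀ i, ∀ v ∈ s, f i v = ∑ y ∈ s, IncidenceAlgebra.mu R y v * F i y :=
    fun i v _ => by rw [hf, sum_map]; rfl
  have hentry : ∀ i₁ i₂ (t : Fin p → Fin n),
      F i₁ (meetAll (z i₁ ⊓ x (Fin.castAdd m i₂)) fun l => x (Fin.castAdd m (t l))) =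
        ∑ j, (f i₁ (x j) *
          if x j ≤ meetAll (z i₁) (fun l => x (Fin.castAdd m (t l))) then (1 : R) else 0) *
            if x j ≤ x (Fin.castAdd m i₂) then (1 : R) else 0 := by
    intro i₁ i₂ t
    rw [meetAll_inf, IncidenceAlgebra.eq_sum_mul_zeta_of_isLowerSet hs (hfs i₁)
      (hs inf_le_right (hmem _)), sum_map]
    refine sum_congr rfl fun j _ => ?_
    simp only [IncidenceAlgebra.zeta_apply, le_inf_iff, ite_zero_mul_ite_zero, mul_one, mul_assoc]
    rfl
  simp only [hentry]
  exact detF_sum_mul_eq_sum_detF_mul_det 𝓕 _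
    (Matrix.of fun j i => if x j ≤ x (Fin.castAdd m i) then 1 else 0)

/-- let `L` be a finite meet-semilattice, `X = {x₁,…,x_n}` and
`X̄ = {x₁,…,x_{n+m}}` the smallest factor-closed subset of `L` containing `X`, `k = p + 2 ≥ 2`,
`𝓕 : (S_n)^{k-2} → R`; for each `1 ≤ i ≤ n` fix `z i ∈ X̄` with `z i ≤ xᵢ` and a function
`F i` on `X̄`, and set `f i v = ∑_{y ∈ X̄} μ(y,v) F i y`, `ζ(u,v) = 1` if `u ≤ v`, else `0`.
Then `Det_𝓕((F_{x_{i₁}}(z_{x_{i₁}} ∧ x_{i₂} ∧ ⋯ ∧ x_{i_k}))) = ∑_{k₁<⋯<k_n}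
Det_𝓕((f_{x_{i₁}}(x_{k_{i₂}}) ζ(x_{k_{i₂}}, z_{x_{i₁}} ∧ x_{i₃} ∧ ⋯ ∧ x_{i_k}))) ⋅
det(ζ(x_{k_i},x_j))`. -/
theorem li_expansion_detF {L R : Type*} [Fintype L] [DecidableEq L] [SemilatticeInf L]
    [LocallyFiniteOrder L] [DecidableRel ((· ≤ ·) : L → L → Prop)] [CommRing R]
    {n m p : ℕ} (x : Fin (n + m) → L) (hinj : Function.Injective x)
    (hfc : ∀ (j : Fin (n + m)) (w : L), w ≤ x j → ∃ j' : Fin (n + m), x j' = w)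
    (hmin : ∀ j : Fin (n + m), ∃ i : Fin n, x j ≤ x (Fin.castAdd m i))
    (z : Fin n → L) (hzmem : ∀ i, ∃ j : Fin (n + m), z i = x j)
    (hz : ∀ i : Fin n, z i ≤ x (Fin.castAdd m i))
    (𝓕 : (Fin p → Equiv.Perm (Fin n)) → R)
    (F : Fin n → L → R)
    (f : Fin n → L → R)
    (hf : ∀ i v, f i v = ∑ j : Fin (n + m), IncidenceAlgebra.mu R (x j) v * F i (x j)) :
    DetF 𝓕 (fun i₁ i₂ t =>
        F i₁ (meetAll (z i₁ ⊓ x (Fin.castAdd m i₂)) (fun l => x (Fin.castAdd m (t l))))) =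
      ∑ κ ∈ Finset.univ.filter
          (fun κ : Fin n → Fin (n + m) => ∀ i j : Fin n, i < j → κ i < κ j),
        DetF 𝓕 (fun i₁ i₂ t =>
            f i₁ (x (κ i₂)) *
              (if x (κ i₂) ≤ meetAll (z i₁) (fun l => x (Fin.castAdd m (t l))) then (1 : R)
                else 0)) *
          Matrix.det (Matrix.of fun i j : Fin n =>
            if x (κ i) ≤ x (Fin.castAdd m j) then (1 : R) else 0) :=
  li_expansion_detF_general x hinj hfc z 𝓕 F f hf
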